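/- arXiv:2403.09101 — 2 statements merged into one kernel-verified Lean document; each statement's English description precedes it below -/
import Mathlib

section
/- Symmetric noise risk identity: Let ℓ : X × Fin K → ℝ be a loss function depending on a classifier, and suppose for every x, Σ_{k=1}^{K} ℓ(x,k) = C for a constant C (symmetric loss condition). Under symmetric label noise with rate η (the observed label equals the true label y with probability 1−η and equals each other label with probability η/(K−1)), the noisy risk satisfies R^η(f) = (1 − ηK/(K−1))·R(f) + C·η/(K−1), where R(f) = E_{(x,y)} ℓ(x,y) and R^η(f) = E over the noisy label distribution. -/
/-!
A symmetric loss sums to `C` over all labels, so the loss summed over the wrong labels is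
`C - ℓ(x, y)`. The noisy loss of each sample is therefore an affine function of its clean
loss, with coefficients independent of the sample, and taking expectations preserves it.
-/

open Finset

theorem noisy_loss_eq_of_sum_eq {α : Type*} [Fintype α] [DecidableEq α]
    (hα : Fintype.card α ≠ 1) (ℓ : α → ℝ) {C : ℝ} (hℓ : ∑ k, ℓ k = C) (a : α) (η : ℝ) :
    (1 - η) * ℓ a + η / (Fintype.card α - 1) * ∑ k ∈ univ \ {a}, ℓ k =
      (1 - η * Fintype.card α / (Fintype.card α - 1)) * ℓ a +
        C * η / (Fintype.card α - 1) := by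
  have hcard : (Fintype.card α : ℝ) - 1 ≠ 0 := sub_ne_zero.mpr (by exact_mod_cast hα)
  rw [sum_sdiff_eq_sub (subset_univ _), sum_singleton, hℓ]
  field_simp
  ring

theorem sum_mul_affine_of_sum_eq_one {S : Type*} [Fintype S] {μ : S → ℝ}
    (hμ : ∑ s, μ s = 1) (f : S → ℝ) (c d : ℝ) :
    ∑ s, μ s * (c * f s + d) = c * ∑ s, μ s * f s + d := by
  simp only [mul_add, sum_add_distrib, ← sum_mul, hμ, one_mul, mul_sum, mul_left_comm]

theorem symmetric_noise_risk_identity_general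
    (K : ℕ) (hK : 2 ≤ K) (S : Type*) [Fintype S]
    (μ : S → ℝ) (hμs : ∑ s, μ s = 1)
    (y : S → Fin K) (ℓ : S → Fin K → ℝ) (C η : ℝ)
    (hsym : ∀ s, ∑ k, ℓ s k = C) :
    (∑ s, μ s * ((1 - η) * ℓ s (y s) +
        (η / (K - 1)) * ∑ k ∈ Finset.univ \ {y s}, ℓ s k)) =
      (1 - η * K / (K - 1)) * (∑ s, μ s * ℓ s (y s)) + C * η / (K - 1) := by
  have hcard : Fintype.card (Fin K) ≠ 1 := by rw [Fintype.card_fin]; omega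
  have hnoisy s := noisy_loss_eq_of_sum_eq hcard (ℓ s) (hsym s) (y s) η
  simp only [Fintype.card_fin] at hnoisy
  simp only [hnoisy]
  exact sum_mul_affine_of_sum_eq_one hμs _ _ _

/-- Symmetric noise risk identity: if the loss is symmetric
(∑ₖ ℓ(x,k) = C) then the noisy risk under symmetric label noise of rate η
satisfies R^η = (1 - ηK/(K-1))·R + C·η/(K-1).  The data distribution is a
finitely-supported distribution μ over samples `S`, with true label `y s`. -/
theorem symmetric_noise_risk_identity
    (K : ℕ) (hK : 2 ≤ K) (S : Type*) [Fintype S]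
    (μ : S → ℝ) (hμ : ∀ s, 0 ≤ μ s) (hμs : ∑ s, μ s = 1)
    (y : S → Fin K) (ℓ : S → Fin K → ℝ) (C η : ℝ)
    (hη0 : 0 ≤ η) (hη1 : η ≤ 1)
    (hsym : ∀ s, ∑ k, ℓ s k = C) :
    (∑ s, μ s * ((1 - η) * ℓ s (y s) +
        (η / (K - 1)) * ∑ k ∈ Finset.univ \ {y s}, ℓ s k)) =
      (1 - η * K / (K - 1)) * (∑ s, μ s * ℓ s (y s)) + C * η / (K - 1) :=
  symmetric_noise_risk_identity_general K hK S μ hμs y ℓ C η hsym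
end

section
/- Asymmetric noise risk decomposition: Suppose for each true label y, the noisy label equals y with probability 1 − η_y and equals each k ≠ y with probability η_{y,k} (Σ_{k≠y} η_{y,k} = η_y), and Σ_{k=1}^K ℓ(x,k) = C for all x. Then the noisy risk satisfies R^η(f) = E_{x,y}[(1−η_y)·C] − E_{x,y}[ Σ_{k≠y} (1 − η_y − η_{y,k})·ℓ(x,k) ]. -/
open Real Finset

/-! Writing `C = ℓ(x,y) + ∑_{k≠y} ℓ(x,k)` turns the clean term `(1-η_y) ℓ(x,y)` into
`(1-η_y) C - ∑_{k≠y} (1-η_y) ℓ(x,k)`, which absorbs the flipped terms `η_{y,k} ℓ(x,k)`. -/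

theorem one_sub_mul_add_sum_sdiff_singleton {ι R : Type*} [Fintype ι] [DecidableEq ι]
    [CommRing R] (j : ι) (ℓ η : ι → R) (a : R) :
    (1 - a) * ℓ j + ∑ k ∈ univ \ {j}, η k * ℓ k =
      (1 - a) * ∑ k, ℓ k - ∑ k ∈ univ \ {j}, (1 - a - η k) * ℓ k := by
  rw [sum_eq_add_sum_sdiff_singleton_of_mem (mem_univ j)]
  simp only [sub_mul, sum_sub_distrib, mul_add, mul_sum]
  ring

theorem asymmetric_noise_risk_decomposition_general
    (K : ℕ) (S : Type*) [Fintype S]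
    (μ : S → ℝ)
    (y : S → Fin K) (ℓ : S → Fin K → ℝ) (C : ℝ)
    (ηy : Fin K → ℝ) (ηm : Fin K → Fin K → ℝ)
    (hsym : ∀ s, ∑ k, ℓ s k = C) :
    (∑ s, μ s * ((1 - ηy (y s)) * ℓ s (y s) +
        ∑ k ∈ Finset.univ \ {y s}, ηm (y s) k * ℓ s k)) =
      (∑ s, μ s * ((1 - ηy (y s)) * C)) -
        (∑ s, μ s * ∑ k ∈ Finset.univ \ {y s},
          (1 - ηy (y s) - ηm (y s) k) * ℓ s k) := by
  rw [← sum_sub_distrib]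
  refine sum_congr rfl fun s _ => ?_
  rw [← mul_sub, ← hsym s, one_sub_mul_add_sum_sdiff_singleton]

/-- Asymmetric noise risk decomposition: with class-dependent noise rates
η_y = ∑_{k≠y} η_{y,k} and a symmetric loss ∑ₖ ℓ(x,k) = C,
R^η(f) = E[(1-η_y)·C] - E[∑_{k≠y} (1 - η_y - η_{y,k}) ℓ(x,k)]. -/
theorem asymmetric_noise_risk_decomposition
    (K : ℕ) (hK : 2 ≤ K) (S : Type*) [Fintype S]
    (μ : S → ℝ) (hμ : ∀ s, 0 ≤ μ s) (hμs : ∑ s, μ s = 1)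
    (y : S → Fin K) (ℓ : S → Fin K → ℝ) (C : ℝ)
    (ηy : Fin K → ℝ) (ηm : Fin K → Fin K → ℝ)
    (hηy0 : ∀ j, 0 ≤ ηy j) (hηy1 : ∀ j, ηy j < 1)
    (hηm0 : ∀ j k, 0 ≤ ηm j k)
    (hηsum : ∀ j, ∑ k ∈ Finset.univ \ {j}, ηm j k = ηy j)
    (hsym : ∀ s, ∑ k, ℓ s k = C) :
    (∑ s, μ s * ((1 - ηy (y s)) * ℓ s (y s) +
        ∑ k ∈ Finset.univ \ {y s}, ηm (y s) k * ℓ s k)) =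
      (∑ s, μ s * ((1 - ηy (y s)) * C)) -
        (∑ s, μ s * ∑ k ∈ Finset.univ \ {y s},
          (1 - ηy (y s) - ηm (y s) k) * ℓ s k) :=
  asymmetric_noise_risk_decomposition_general K S μ y ℓ C ηy ηm hsym
end
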